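/- arXiv:1910.08913 — 4 statements merged into one kernel-verified Lean document; each statement's English description precedes it below -/
import Mathlib

section
/- For every n ≥ 0, the polynomial identity t²(t+1)·(d/dt)c_n(t) = c_{n+1}(t) + t²·c_n(t) holds in ℤ[t], where c_n(t) is the row–column generating polynomial of the diagram-counting numbers c_n(k,l). -/
/-!
Encode `c n` in the bivariate polynomial `F_n(x, y) = ∑ c_n(k,l) x^k y^l`, so that `c_n(t) = F_n(t, t)`.
The recurrence says `F_{n+1} = xy((1 + x)∂ₓ + (1 + y)∂_y - 1) F_n`, and on the diagonal `∂ₓ + ∂_y`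
becomes `d/dt`, giving `c_{n+1} = t²((1 + t)c_n' - c_n)`. Concretely, multiplying `c_n(k,l)` by `k + l`
corresponds to `t · d/dt`, and shifting `k` or `l` by one to multiplication by `t`.
-/

/-- Diagram-counting numbers `c n k l`: `c 1 1 1 = 1`, zero off `(1,1)` at `n = 1`,
zero whenever `k ≤ 0` or `l ≤ 0`, and satisfying the recurrence
`c (n+1) k l = k * c n k (l-1) + l * c n (k-1) l + (k+l-3) * c n (k-1) (l-1)`. -/
def c : ℕ → ℤ → ℤ → ℤ
  | 0, _, _ => 0
  | 1, k, l => if k = 1 ∧ l = 1 then 1 else 0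
  | n + 2, k, l =>
      if k ≤ 0 ∨ l ≤ 0 then 0
      else k * c (n + 1) k (l - 1) + l * c (n + 1) (k - 1) l
            + (k + l - 3) * c (n + 1) (k - 1) (l - 1)

/-- The row-column generating polynomial `c_n(t)`: `c_0(t) = t` and, for `n ≥ 1`,
`c_n(t) = ∑_{(k,l)} c_n(k,l) t^(k+l)` (a finite sum over the support `Δ_n ⊆ [1,n]²`). -/
noncomputable def cpoly : ℕ → Polynomial ℤ
  | 0 => Polynomial.X
  | n + 1 => ∑ k ∈ Finset.Icc 1 (n + 1), ∑ l ∈ Finset.Icc 1 (n + 1),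
      Polynomial.C (c (n + 1) (k : ℤ) (l : ℤ)) * Polynomial.X ^ (k + l)

open Polynomial Finset

theorem c_eq_zero_outside_box :
    ∀ (n : ℕ) {k l : ℤ}, ¬ (1 ≤ k ∧ k ≤ n ∧ 1 ≤ l ∧ l ≤ n) → c n k l = 0
  | 0, _, _, _ => rfl
  | 1, k, l, h => by
    rw [c, if_neg]
    omega
  | n + 2, k, l, h => by
    rw [c]
    split_ifs with hkl
    · rfl
    · rw [c_eq_zero_outside_box (n + 1) (by omega), c_eq_zero_outside_box (n + 1) (by omega),
        c_eq_zero_outside_box (n + 1) (by omega)]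
      ring

theorem bounds_of_c_ne_zero {n : ℕ} {k l : ℤ} (h : c n k l ≠ 0) :
    1 ≤ k ∧ k ≤ n ∧ 1 ≤ l ∧ l ≤ n :=
  not_not.mp (mt (c_eq_zero_outside_box n) h)

def cStep (f : ℤ → ℤ → ℤ) (k l : ℤ) : ℤ :=
  k * f k (l - 1) + l * f (k - 1) l + (k + l - 3) * f (k - 1) (l - 1)

theorem c_add_two (n : ℕ) : c (n + 2) = cStep (c (n + 1)) := by
  ext k l
  rw [c, cStep]
  split_ifs with hkl
  · rw [c_eq_zero_outside_box (n + 1) (by omega), c_eq_zero_outside_box (n + 1) (by omega),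
      c_eq_zero_outside_box (n + 1) (by omega)]
    ring
  · rfl

noncomputable def rowColPoly (s : Finset ℕ) (f : ℤ → ℤ → ℤ) : ℤ[X] :=
  ∑ k ∈ s, ∑ l ∈ s, C (f k l) * X ^ (k + l)

theorem rowColPoly_add (s : Finset ℕ) (f g : ℤ → ℤ → ℤ) :
    rowColPoly s (f + g) = rowColPoly s f + rowColPoly s g := by
  simp only [rowColPoly, Pi.add_apply, map_add, add_mul, sum_add_distrib]

theorem rowColPoly_sub (s : Finset ℕ) (f g : ℤ → ℤ → ℤ) :
    rowColPoly s (f - g) = rowColPoly s f - rowColPoly s g := by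
  simp only [rowColPoly, Pi.sub_apply, map_sub, sub_mul, sum_sub_distrib]

theorem rowColPoly_swap (s : Finset ℕ) (f : ℤ → ℤ → ℤ) :
    rowColPoly s (fun k l => f l k) = rowColPoly s f := by
  rw [rowColPoly, sum_comm]
  simp only [rowColPoly, add_comm]

theorem rowColPoly_eq_of_subset {s t : Finset ℕ} (hst : s ⊆ t) (f : ℤ → ℤ → ℤ)
    (hf : ∀ k l : ℕ, f k l ≠ 0 → k ∈ s ∧ l ∈ s) : rowColPoly s f = rowColPoly t f := by
  have hf' : ∀ k l : ℕ, k ∉ s ∨ l ∉ s → f k l = 0 := fun k l hkl => by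
    by_contra h
    have := hf k l h
    tauto
  unfold rowColPoly
  rw [sum_subset hst fun k _ hk => sum_eq_zero fun l _ => by simp [hf' k l (.inl hk)]]
  exact sum_congr rfl fun k _ => sum_subset hst fun l _ hl => by simp [hf' k l (.inr hl)]

theorem rowColPoly_shift_snd (N : ℕ) (f : ℤ → ℤ → ℤ) (hf : ∀ k l, f k l ≠ 0 → 0 ≤ l ∧ l < N) :
    rowColPoly (range (N + 1)) (fun k l => f k (l - 1)) = X * rowColPoly (range (N + 1)) f := by
  have hf' : ∀ k l : ℤ, l = -1 ∨ l = N → f k l = 0 := fun k l hl => by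
    by_contra h
    have := hf k l h
    omega
  unfold rowColPoly
  rw [mul_sum]
  refine sum_congr rfl fun k _ => ?_
  rw [sum_range_succ', sum_range_succ _ N, hf' k N (.inr rfl)]
  simp only [Nat.cast_zero, zero_sub, hf' k (-1) (.inl rfl), map_zero, zero_mul, add_zero, mul_sum]
  refine sum_congr rfl fun l _ => ?_
  push_cast
  rw [add_sub_cancel_right]
  ring

theorem rowColPoly_shift_fst (N : ℕ) (f : ℤ → ℤ → ℤ) (hf : ∀ k l, f k l ≠ 0 → 0 ≤ k ∧ k < N) :
    rowColPoly (range (N + 1)) (fun k l => f (k - 1) l) = X * rowColPoly (range (N + 1)) f := by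
  have h := rowColPoly_shift_snd N (fun k l => f l k) fun k l h => hf l k h
  rw [← rowColPoly_swap _ f, ← rowColPoly_swap _ fun k l => f (k - 1) l]
  exact h

theorem X_mul_derivative_C_mul_X_pow {R : Type*} [CommSemiring R] (a : R) (m : ℕ) :
    X * derivative (C a * X ^ m) = C (m * a) * X ^ m := by
  rcases m with _ | m
  · simp
  · rw [derivative_C_mul_X_pow, Nat.add_sub_cancel, map_mul, map_mul, mul_comm (C a)]
    ring

theorem X_mul_derivative_rowColPoly (s : Finset ℕ) (f : ℤ → ℤ → ℤ) :
    X * derivative (rowColPoly s f) = rowColPoly s (fun k l => (k + l) * f k l) := by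
  simp only [rowColPoly, derivative_sum, mul_sum, X_mul_derivative_C_mul_X_pow, Nat.cast_add]

theorem rowColPoly_cStep (N : ℕ) (f : ℤ → ℤ → ℤ)
    (hf : ∀ k l, f k l ≠ 0 → (0 ≤ k ∧ k < N) ∧ (0 ≤ l ∧ l < N)) :
    rowColPoly (range (N + 1)) (cStep f) =
      X ^ 2 * ((X + 1) * derivative (rowColPoly (range (N + 1)) f)
        - rowColPoly (range (N + 1)) f) := by
  set s := range (N + 1)
  have hk : rowColPoly s (fun k l => k * f k (l - 1)) = X * rowColPoly s (fun k l => k * f k l) :=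
    rowColPoly_shift_snd N (fun k l => k * f k l) fun k l h => (hf k l (right_ne_zero_of_mul h)).2
  have hl : rowColPoly s (fun k l => l * f (k - 1) l) = X * rowColPoly s (fun k l => l * f k l) :=
    rowColPoly_shift_fst N (fun k l => l * f k l) fun k l h => (hf k l (right_ne_zero_of_mul h)).1
  have hkl : rowColPoly s (fun k l => (k + l - 3) * f (k - 1) (l - 1)) =
      X ^ 2 * rowColPoly s (fun k l => (k + l - 1) * f k l) := by
    set g : ℤ → ℤ → ℤ := fun k l => (k + l - 1) * f k l
    rw [pow_two, mul_assoc,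
      ← rowColPoly_shift_snd N g fun k l h => (hf k l (right_ne_zero_of_mul h)).2,
      ← rowColPoly_shift_fst N (fun k l => g k (l - 1))
        fun k l h => (hf k (l - 1) (right_ne_zero_of_mul h)).1]
    congr 1
    ext k l
    simp only [g]
    ring
  have hsum : rowColPoly s (fun k l => k * f k l) + rowColPoly s (fun k l => l * f k l) =
      X * derivative (rowColPoly s f) := by
    rw [X_mul_derivative_rowColPoly, ← rowColPoly_add]
    congr 1
    ext k l
    simp only [Pi.add_apply]
    ring
  have hsub : rowColPoly s (fun k l => (k + l - 1) * f k l) =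
      X * derivative (rowColPoly s f) - rowColPoly s f := by
    rw [X_mul_derivative_rowColPoly, ← rowColPoly_sub]
    congr 1
    ext k l
    simp only [Pi.sub_apply]
    ring
  change rowColPoly s ((fun k l => k * f k (l - 1)) + (fun k l => l * f (k - 1) l)
    + fun k l => (k + l - 3) * f (k - 1) (l - 1)) = _
  rw [rowColPoly_add, rowColPoly_add, hk, hl, hkl]
  linear_combination X * hsum + X ^ 2 * hsub

theorem cpoly_eq_rowColPoly (n N : ℕ) (hN : n + 1 < N) :
    cpoly (n + 1) = rowColPoly (range N) (c (n + 1)) :=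
  rowColPoly_eq_of_subset (fun k hk => by simp at hk ⊢; omega) _ fun k l h => by
    have := bounds_of_c_ne_zero h
    simp only [mem_Icc]
    omega

/-- For every n ≥ 0, t²(t+1)·(d/dt)c_n(t) = c_{n+1}(t) + t²·c_n(t) in ℤ[t]. -/
theorem stmt0 (n : ℕ) :
    Polynomial.X ^ 2 * (Polynomial.X + 1) * Polynomial.derivative (cpoly n)
      = cpoly (n + 1) + Polynomial.X ^ 2 * cpoly n := by
  rcases n with _ | m
  · have hc1 : cpoly 1 = X ^ 2 := by simp [cpoly, c]
    rw [hc1, cpoly, derivative_X]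
    ring
  · have hf : ∀ k l, c (m + 1) k l ≠ 0 → (0 ≤ k ∧ k < (m + 2 : ℕ)) ∧ (0 ≤ l ∧ l < (m + 2 : ℕ)) :=
      fun k l h => by
        have := bounds_of_c_ne_zero h
        omega
    rw [cpoly_eq_rowColPoly m (m + 3) (by omega), cpoly_eq_rowColPoly (m + 1) (m + 3) (by omega),
      c_add_two, rowColPoly_cStep (m + 2) _ hf]
    ring
end

section
/- For every n ≥ 0, the convolution identity (1+t)·c_{n+1}(t) = ∑_{k=0}^{n} binom(n,k)·(c_k(t) + c_{k+1}(t))·c_{n−k}(t) holds in ℤ[t]; equivalently, the exponential generating function C(z,t) = ∑_{n≥0} c_n(t) z^n/n! satisfies C² − (1+t)·∂_z C + C·∂_z C = 0 with C(0,t) = t. -/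
/-!
Summing the recurrence for `c_{n+1}(k,l)` along the antidiagonals `k + l = m` shows
`c_{n+1} = D c_n - t² c_n` for the derivation `D = t²(1+t) d/dt`. For a derivation `D`, the
twisted operators `D - s` satisfy the Leibniz rule `(D - s - s')(fg) = (D - s)f · g + f · (D - s')g`,
so the binomial convolution on the right-hand side obeys the recurrence `h_{n+1} = D h_n - 2t² h_n`.
Since `D(1+t) = t²(1+t)`, multiplication by `1 + t` carries `D - t²` to `D - 2t²`, so
`(1+t) c_{n+1}` obeys the same recurrence, and both sides equal `t³ + t⁴` at `n = 0`.
-/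

open Finset Polynomial

theorem Derivation.sum_choose_mul_succ_of_twisted {R A : Type*} [CommSemiring R] [CommRing A]
    [Algebra R A] (D : Derivation R A A) {s t : A} {f g : ℕ → A}
    (hf : ∀ k, f (k + 1) = D (f k) - s * f k) (hg : ∀ k, g (k + 1) = D (g k) - t * g k)
    (n : ℕ) :
    ∑ k ∈ range (n + 2), ((n + 1).choose k : A) * (f k * g (n + 1 - k))
      = D (∑ k ∈ range (n + 1), (n.choose k : A) * (f k * g (n - k)))
        - (s + t) * ∑ k ∈ range (n + 1), (n.choose k : A) * (f k * g (n - k)) := by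
  rw [sum_choose_succ_mul (fun i j => f i * g j), map_sum, mul_sum, ← sum_sub_distrib,
    ← sum_add_distrib]
  refine sum_congr rfl fun k hk => ?_
  rw [show n + 1 - k = n - k + 1 by have := mem_range.1 hk; omega, hf, hg, Derivation.leibniz,
    Derivation.leibniz, Derivation.map_natCast, smul_eq_mul, smul_eq_mul, smul_eq_mul]
  ring

theorem Polynomial.coeff_sum_C_mul_X_pow_add {R : Type*} [Semiring R] {s : Finset (ℕ × ℕ)}
    {f : ℕ × ℕ → R} (hf : ∀ p ∉ s, f p = 0) (m : ℕ) :
    (∑ p ∈ s, C (f p) * X ^ (p.1 + p.2)).coeff m = ∑ p ∈ antidiagonal m, f p := by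
  have hf' (p : ℕ × ℕ) : (if p ∈ s then f p else 0) = f p := by
    split_ifs with hp
    · rfl
    · exact (hf p hp).symm
  simp only [finsetSum_coeff, coeff_C_mul_X_pow, eq_comm (a := m),
    ← HasAntidiagonal.mem_antidiagonal]
  rw [sum_ite_mem, inter_comm, ← sum_ite_mem]
  exact sum_congr rfl fun p _ => hf' p

theorem Polynomial.coeff_X_sq_mul_one_add_X_mul_derivative_sub {R : Type*} [CommRing R]
    (f : R[X]) (m : ℕ) :
    (X ^ 2 * ((1 + X) * derivative f - f)).coeff (m + 2)
      = (m + 1) * f.coeff (m + 1) + (m - 1) * f.coeff m := by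
  rw [coeff_X_pow_mul, add_mul, one_mul, coeff_sub, coeff_add, coeff_derivative]
  rcases m with _ | m
  · simp [sub_eq_add_neg]
  · rw [coeff_X_mul, coeff_derivative]
    push_cast
    ring

theorem c_eq_zero : ∀ {n : ℕ} {k l : ℤ}, k ≤ 0 ∨ l ≤ 0 ∨ n < k ∨ n < l → c n k l = 0
  | 0, _, _, _ => rfl
  | 1, _, _, h => if_neg (by omega)
  | n + 2, k, l, h => by
    rw [c]
    split_ifs
    · rfl
    · rw [c_eq_zero (by omega), c_eq_zero (by omega), c_eq_zero (by omega)]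
      ring

theorem c_add_two_s1 (n : ℕ) (k l : ℤ) :
    c (n + 2) k l = k * c (n + 1) k (l - 1) + l * c (n + 1) (k - 1) l
      + (k + l - 3) * c (n + 1) (k - 1) (l - 1) := by
  rw [c]
  split_ifs
  · rw [c_eq_zero (by omega), c_eq_zero (by omega), c_eq_zero (by omega)]
    ring
  · rfl

def antidiagSum (n m : ℕ) : ℤ := ∑ p ∈ antidiagonal m, c n p.1 p.2

theorem antidiagSum_of_lt_two {n m : ℕ} (hm : m < 2) : antidiagSum n m = 0 :=
  sum_eq_zero fun p hp => c_eq_zero (by rw [HasAntidiagonal.mem_antidiagonal] at hp; omega)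

theorem antidiagSum_add_two (n m : ℕ) :
    antidiagSum (n + 2) (m + 2)
      = (m + 1) * antidiagSum (n + 1) (m + 1) + (m - 1) * antidiagSum (n + 1) m := by
  have h_rows : ∑ p ∈ antidiagonal (m + 2), (p.1 : ℤ) * c (n + 1) p.1 (p.2 - 1)
      = ∑ p ∈ antidiagonal (m + 1), (p.1 : ℤ) * c (n + 1) p.1 p.2 := by
    rw [Nat.sum_antidiagonal_succ']
    simp [c_eq_zero]
  have h_cols : ∑ p ∈ antidiagonal (m + 2), (p.2 : ℤ) * c (n + 1) (p.1 - 1) p.2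
      = ∑ p ∈ antidiagonal (m + 1), (p.2 : ℤ) * c (n + 1) p.1 p.2 := by
    rw [Nat.sum_antidiagonal_succ]
    simp [c_eq_zero]
  have h_shift : ∑ p ∈ antidiagonal (m + 2), c (n + 1) (p.1 - 1) (p.2 - 1)
      = antidiagSum (n + 1) m := by
    rw [Nat.sum_antidiagonal_succ, Nat.sum_antidiagonal_succ']
    simp [antidiagSum, c_eq_zero]
  have h_corner : ∑ p ∈ antidiagonal (m + 2),
        ((p.1 : ℤ) + p.2 - 3) * c (n + 1) (p.1 - 1) (p.2 - 1)
      = (m - 1) * antidiagSum (n + 1) m := by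
    rw [← h_shift, mul_sum]
    refine sum_congr rfl fun p hp => ?_
    rw [HasAntidiagonal.mem_antidiagonal] at hp
    rw [show (p.1 : ℤ) + p.2 - 3 = m - 1 by omega]
  have h_weight : (m + 1) * antidiagSum (n + 1) (m + 1)
      = ∑ p ∈ antidiagonal (m + 1), ((p.1 : ℤ) + p.2) * c (n + 1) p.1 p.2 := by
    rw [antidiagSum, mul_sum]
    refine sum_congr rfl fun p hp => ?_
    rw [HasAntidiagonal.mem_antidiagonal] at hp
    rw [show (m : ℤ) + 1 = p.1 + p.2 by omega]
  rw [antidiagSum]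
  simp only [c_add_two_s1, sum_add_distrib]
  rw [h_rows, h_cols, h_corner, h_weight, ← sum_add_distrib]
  simp only [add_mul]

theorem coeff_cpoly_succ (n m : ℕ) : (cpoly (n + 1)).coeff m = antidiagSum (n + 1) m := by
  rw [cpoly, ← sum_product', antidiagSum]
  refine coeff_sum_C_mul_X_pow_add (fun p hp => c_eq_zero ?_) m
  simp only [mem_product, mem_Icc] at hp
  omega

theorem cpoly_one : cpoly 1 = X ^ 2 := by
  rw [cpoly]
  simp [c]

theorem cpoly_succ : ∀ n, cpoly (n + 1) = X ^ 2 * ((1 + X) * derivative (cpoly n) - cpoly n)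
  | 0 => by
    rw [cpoly_one, show cpoly 0 = X from rfl, derivative_X]
    ring
  | n + 1 => by
    ext m
    rcases lt_or_ge m 2 with hm | hm
    · rw [coeff_cpoly_succ, antidiagSum_of_lt_two hm, coeff_X_pow_mul', if_neg (by omega)]
    · obtain ⟨m, rfl⟩ := Nat.exists_eq_add_of_le' hm
      rw [coeff_X_sq_mul_one_add_X_mul_derivative_sub, coeff_cpoly_succ, coeff_cpoly_succ,
        coeff_cpoly_succ, antidiagSum_add_two]

noncomputable def cDeriv : Derivation ℤ ℤ[X] ℤ[X] := (X ^ 2 * (1 + X) : ℤ[X]) • derivative'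

theorem cDeriv_apply (p : ℤ[X]) : cDeriv p = X ^ 2 * (1 + X) * derivative p := rfl

theorem cpoly_succ_eq_cDeriv (n : ℕ) : cpoly (n + 1) = cDeriv (cpoly n) - X ^ 2 * cpoly n := by
  rw [cDeriv_apply, cpoly_succ]
  ring

/-- For every n ≥ 0, (1+t)·c_{n+1}(t) = ∑_{k=0}^{n} C(n,k)·(c_k(t)+c_{k+1}(t))·c_{n−k}(t). -/
theorem stmt1 (n : ℕ) :
    (1 + Polynomial.X) * cpoly (n + 1)
      = ∑ k ∈ Finset.range (n + 1),
          (Nat.choose n k : Polynomial ℤ) * ((cpoly k + cpoly (k + 1)) * cpoly (n - k)) := by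
  have hc := cpoly_succ_eq_cDeriv
  have h_adjacent (k : ℕ) : cpoly (k + 1) + cpoly (k + 1 + 1)
      = cDeriv (cpoly k + cpoly (k + 1)) - X ^ 2 * (cpoly k + cpoly (k + 1)) := by
    rw [hc (k + 1), map_add]
    linear_combination hc k
  induction n with
  | zero =>
    simp only [zero_add, range_one, sum_singleton, Nat.choose_self, Nat.cast_one, one_mul,
      Nat.sub_self, cpoly_one]
    rw [show cpoly 0 = X from rfl]
    ring
  | succ n ih =>
    rw [Derivation.sum_choose_mul_succ_of_twisted cDeriv h_adjacent hc n, ← ih, hc (n + 1),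
      Derivation.leibniz, smul_eq_mul, smul_eq_mul, map_add, Derivation.map_one_eq_zero,
      cDeriv_apply X, derivative_X]
    ring
end

section
/- For every n ≥ 1, twice the total half-perimeter equals the count at size n plus the count at size n+1: 2·∑_{(k,l)} (k+l)·c_n(k,l) = ∑_{(k,l)} c_n(k,l) + ∑_{(k,l)} c_{n+1}(k,l). Equivalently, the average half-perimeter of a diagram of size n in T̃_n is H_n = (1 + c_{n+1}/c_n)/2, where c_n := ∑_{(k,l)} c_n(k,l). -/
open Finset

lemma sum_Icc_one_succ_sub_one (n : ℕ) (f : ℤ → ℤ) (h0 : f 0 = 0) :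
    ∑ l ∈ Icc 1 (n + 1), f (l - 1) = ∑ l ∈ Icc 1 n, f l := by
  induction n with
  | zero => simp [h0]
  | succ n ih =>
    rw [sum_Icc_succ_top (by omega), ih, sum_Icc_succ_top (by omega)]
    push_cast
    rw [add_sub_cancel_right]

lemma sum_Icc_one_succ_sub (n : ℕ) (f : ℤ → ℤ) (h0 : f 0 = 0) (htop : f (n + 1) = 0) {a : ℤ}
    (ha : a = 0 ∨ a = 1) : ∑ l ∈ Icc 1 (n + 1), f (l - a) = ∑ l ∈ Icc 1 n, f l := by
  rcases ha with rfl | rfl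
  · simp only [sub_zero, sum_Icc_succ_top (show 1 ≤ n + 1 by omega)]
    push_cast
    rw [htop, add_zero]
  · exact sum_Icc_one_succ_sub_one n f h0

lemma sum_sum_Icc_one_succ_sub (n : ℕ) (F : ℤ → ℤ → ℤ)
    (hF : ∀ k l, k ∉ Set.Icc 1 (n : ℤ) ∨ l ∉ Set.Icc 1 (n : ℤ) → F k l = 0) {a b : ℤ}
    (ha : a = 0 ∨ a = 1) (hb : b = 0 ∨ b = 1) :
    ∑ k ∈ Icc 1 (n + 1), ∑ l ∈ Icc 1 (n + 1), F (k - a) (l - b)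
      = ∑ k ∈ Icc 1 n, ∑ l ∈ Icc 1 n, F k l := by
  have hrow (k : ℤ) := sum_Icc_one_succ_sub n (F k) (hF _ _ (by simp)) (hF _ _ (by simp)) hb
  simp only [hrow]
  exact sum_Icc_one_succ_sub n (fun k => ∑ l ∈ Icc 1 n, F k l)
    (sum_eq_zero fun _ _ => hF _ _ (by simp)) (sum_eq_zero fun _ _ => hF _ _ (by simp)) ha

lemma c_eq_zero_of_notMem (n : ℕ) {k l : ℤ} (h : k ∉ Set.Icc 1 (n : ℤ) ∨ l ∉ Set.Icc 1 (n : ℤ)) :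
    c n k l = 0 := by
  simp only [Set.mem_Icc] at h
  match n with
  | 0 => rfl
  | 1 =>
    rw [c, if_neg]
    omega
  | n + 2 =>
    rw [c]
    split_ifs with hkl
    · rfl
    · have hzero (i j : ℤ) (hij : i ∉ Set.Icc 1 (n + 1 : ℤ) ∨ j ∉ Set.Icc 1 (n + 1 : ℤ)) :
          c (n + 1) i j = 0 := mod_cast c_eq_zero_of_notMem (n + 1) hij
      push_cast at h
      rw [hzero k (l - 1), hzero (k - 1) l, hzero (k - 1) (l - 1)]
      · ring
      all_goals simp only [Set.mem_Icc]; omega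

lemma c_succ {n : ℕ} (hn : 1 ≤ n) (k l : ℤ) :
    c (n + 1) k l = k * c n k (l - 1) + l * c n (k - 1) l + (k + l - 3) * c n (k - 1) (l - 1) := by
  obtain ⟨m, rfl⟩ : ∃ m, n = m + 1 := ⟨n - 1, by omega⟩
  rw [c]
  split_ifs with hkl
  · have hzero (i j : ℤ) (hij : i ≤ 0 ∨ j ≤ 0) : c (m + 1) i j = 0 :=
      c_eq_zero_of_notMem _ (by simp only [Set.mem_Icc]; omega)
    rw [hzero k (l - 1), hzero (k - 1) l, hzero (k - 1) (l - 1)]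
    · ring
    all_goals omega
  · rfl

lemma sum_c_succ {n : ℕ} (hn : 1 ≤ n) :
    ∑ k ∈ Icc 1 (n + 1), ∑ l ∈ Icc 1 (n + 1), c (n + 1) k l
      = ∑ k ∈ Icc 1 n, ∑ l ∈ Icc 1 n, (2 * ((k : ℤ) + l) - 1) * c n k l := by
  have hsupp (w : ℤ → ℤ → ℤ) k l (hkl : k ∉ Set.Icc 1 (n : ℤ) ∨ l ∉ Set.Icc 1 (n : ℤ)) :
      w k l * c n k l = 0 := by
    rw [c_eq_zero_of_notMem n hkl, mul_zero]
  have hrow := sum_sum_Icc_one_succ_sub n (fun k l => k * c n k l) (hsupp _) (.inl rfl) (.inr rfl)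
  have hcol := sum_sum_Icc_one_succ_sub n (fun k l => l * c n k l) (hsupp _) (.inr rfl) (.inl rfl)
  have hdiag := sum_sum_Icc_one_succ_sub n (fun k l => (k + l - 1) * c n k l) (hsupp _)
    (.inr rfl) (.inr rfl)
  simp only [sub_zero, show ∀ k l : ℤ, k - 1 + (l - 1) - 1 = k + l - 3 from fun _ _ => by ring]
    at hrow hcol hdiag
  simp only [c_succ hn, sum_add_distrib]
  rw [hrow, hcol, hdiag]
  simp only [← sum_add_distrib]
  exact sum_congr rfl fun k _ => sum_congr rfl fun l _ => by ring

/-- For every n ≥ 1, 2·∑_{(k,l)} (k+l)·c_n(k,l) = ∑_{(k,l)} c_n(k,l) + ∑_{(k,l)} c_{n+1}(k,l). -/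
theorem stmt3 (n : ℕ) (hn : 1 ≤ n) :
    2 * ∑ k ∈ Finset.Icc 1 n, ∑ l ∈ Finset.Icc 1 n, ((k : ℤ) + (l : ℤ)) * c n (k : ℤ) (l : ℤ)
      = (∑ k ∈ Finset.Icc 1 n, ∑ l ∈ Finset.Icc 1 n, c n (k : ℤ) (l : ℤ))
        + ∑ k ∈ Finset.Icc 1 (n + 1), ∑ l ∈ Finset.Icc 1 (n + 1),
            c (n + 1) (k : ℤ) (l : ℤ) := by
  rw [sum_c_succ hn]
  simp only [mul_sum, ← sum_add_distrib]
  exact sum_congr rfl fun k _ => sum_congr rfl fun l _ => by ring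
end

section
/- For every n ≥ 2, the number of diagrams of size n in T̃_n with n rows and n columns equals the double factorial (2n−3)!!: c_n(n,n) = (2n−3)!! (while c_1(1,1) = 1). -/
/-! The diagonal entry `c (n+1) (n+1) (n+1)` only sees the corner term `c n n n` of the
recurrence, since `c n` vanishes once `k` or `l` exceeds `n`; its coefficient is `2n - 1`. -/

lemma c_succ_succ (n : ℕ) {k l : ℤ} (hk : 0 < k) (hl : 0 < l) :
    c (n + 2) k l = k * c (n + 1) k (l - 1) + l * c (n + 1) (k - 1) l
      + (k + l - 3) * c (n + 1) (k - 1) (l - 1) := by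
  rw [c, if_neg (by omega)]

lemma c_eq_zero_of_lt (n : ℕ) {k l : ℤ} (h : (n : ℤ) < k ∨ (n : ℤ) < l) : c n k l = 0 := by
  induction n generalizing k l with
  | zero => rfl
  | succ m ih =>
    rcases m with _ | m
    · rw [c, if_neg (by omega)]
    · unfold c
      split_ifs
      · rfl
      · push_cast at h
        rw [ih (by omega), ih (by omega), ih (by omega)]
        ring

lemma c_diag_succ {n : ℕ} (hn : 1 ≤ n) :
    c (n + 1) (n + 1 : ℕ) (n + 1 : ℕ) = (2 * n - 1) * c n n n := by
  obtain ⟨m, rfl⟩ := Nat.exists_eq_add_of_le' hn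
  push_cast
  rw [c_succ_succ m (by omega) (by omega), c_eq_zero_of_lt _ (by push_cast; omega),
    c_eq_zero_of_lt _ (by push_cast; omega)]
  simp only [add_sub_cancel_right]
  ring

/-- For every n ≥ 2, c_n(n,n) = (2n−3)!!. -/
theorem stmt4 (n : ℕ) (hn : 2 ≤ n) :
    c n (n : ℤ) (n : ℤ) = (Nat.doubleFactorial (2 * n - 3) : ℤ) := by
  induction n, hn using Nat.le_induction with
  | base => decide
  | succ m hm ih =>
    rw [c_diag_succ (by omega), ih, show 2 * (m + 1) - 3 = 2 * m - 3 + 2 by omega,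
      Nat.doubleFactorial_add_two, show 2 * m - 3 + 2 = 2 * m - 1 by omega]
    push_cast [show 1 ≤ 2 * m by omega]
    ring
end
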